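/- arXiv:1706.04349 — 4 statements merged into one kernel-verified Lean document; each statement's English description precedes it below -/
import Mathlib

section
/- In the abstract locality setting, for every morphism x : T ⟶ R of 𝓜 and every k ∈ K(R), the transport T_x(k) ∈ K(T) (the unique element with x ≫ k = T_x(k) ≫ x) satisfies: (a) T_x : K(R) → K(T) is a group homomorphism; (b) T_x depends only on π(x), i.e. if π(x) = π(x′) for x, x′ : T ⟶ R then T_x = T_{x′}; (c) T_{𝟙_R} is the identity of K(R) and T_{x ≫ x′} = T_x ∘ T_{x′} for composable x : T ⟶ R and x′ : R ⟶ Q. Consequently, since π is full, the assignment Q ↦ K(Q), φ ↦ T_x for any lift x of φ, is a well-defined contravariant functor from 𝓕 to abelian groups. -/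
open CategoryTheory

/-- Abstract locality setting: `𝓜` and `𝓕` are categories with the same
objects (here: two category structures `cM`, `cF` on the same type `C`), and
`π : 𝓜 ⥤ 𝓕` is a full functor which is the identity on objects (encoded by its action
`π` on morphisms together with functoriality and fullness).  For each object `Q`, `K Q`
is the set of endomorphisms `k : Q ⟶ Q` of `𝓜` with `π k = 𝟙 Q`; we assume every element
of `K Q` is invertible, `K Q` is commutative under composition, and the divisibility
property (ii).  Given the transport `Tr x k` (the unique element of `K T` with
`x ≫ k = Tr x k ≫ x` for `x : T ⟶ R` in `𝓜`, `k ∈ K R`), we get: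
(a) `Tr x : K R → K T` is a group homomorphism;
(b) `Tr x` depends only on `π x`;
(c) `Tr (𝟙 R)` is the identity of `K R` and `Tr (x ≫ x') = Tr x ∘ Tr x'`.
Consequently (since `π` is full) `Q ↦ K Q` is a well-defined contravariant functor from
`𝓕` to abelian groups. -/
theorem transport_is_contravariant_functor
    {C : Type*} (cM cF : Category C)
    -- π : a full functor 𝓜 ⥤ 𝓕 which is the identity on objects
    (π : ∀ {X Y : C}, cM.Hom X Y → cF.Hom X Y)
    (π_id : ∀ X : C, π (cM.id X) = cF.id X)
    (π_comp : ∀ {X Y Z : C} (f : cM.Hom X Y) (g : cM.Hom Y Z),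
      π (cM.comp f g) = cF.comp (π f) (π g))
    (π_full : ∀ {X Y : C} (φ : cF.Hom X Y), ∃ x : cM.Hom X Y, π x = φ)
    -- (i) every element of K Q is an isomorphism and K Q is abelian under composition
    (hinv : ∀ {Q : C} (k : cM.Hom Q Q), π k = cF.id Q →
      ∃ k' : cM.Hom Q Q, cM.comp k k' = cM.id Q ∧ cM.comp k' k = cM.id Q)
    (hcomm : ∀ {Q : C} (k k' : cM.Hom Q Q), π k = cF.id Q → π k' = cF.id Q →
      cM.comp k k' = cM.comp k' k)
    -- (ii) divisibility
    (hdiv : ∀ {T R : C} (x y : cM.Hom T R), π x = π y →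
      ∃! k : cM.Hom T T, π k = cF.id T ∧ y = cM.comp k x)
    -- the transport T_x : K R → K T and its defining property
    (Tr : ∀ {T R : C}, cM.Hom T R → cM.Hom R R → cM.Hom T T)
    (hTr : ∀ {T R : C} (x : cM.Hom T R) (k : cM.Hom R R), π k = cF.id R →
      π (Tr x k) = cF.id T ∧ cM.comp x k = cM.comp (Tr x k) x) :
    -- (a) Tr x is a group homomorphism K R → K T
    (∀ (T R : C) (x : cM.Hom T R) (k k' : cM.Hom R R),
        π k = cF.id R → π k' = cF.id R →
        Tr x (cM.comp k k') = cM.comp (Tr x k) (Tr x k')) ∧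
    -- (b) Tr x depends only on π x
    (∀ (T R : C) (x x' : cM.Hom T R), π x = π x' →
        ∀ k : cM.Hom R R, π k = cF.id R → Tr x k = Tr x' k) ∧
    -- (c) Tr (𝟙 R) = id and Tr (x ≫ x') = Tr x ∘ Tr x'
    (∀ (R : C) (k : cM.Hom R R), π k = cF.id R → Tr (cM.id R) k = k) ∧
    (∀ (T R Q : C) (x : cM.Hom T R) (x' : cM.Hom R Q) (k : cM.Hom Q Q),
        π k = cF.id Q → Tr (cM.comp x x') k = Tr x (Tr x' k)) := by
  -- cancellation: elements of K acting on the left of a fixed morphism are determined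
  have cancel : ∀ {T R : C} (x : cM.Hom T R) (k₁ k₂ : cM.Hom T T),
      π k₁ = cF.id T → π k₂ = cF.id T →
      cM.comp k₁ x = cM.comp k₂ x → k₁ = k₂ := by
    intro T R x k₁ k₂ h₁ h₂ h
    have hπ : π x = π (cM.comp k₁ x) := by
      rw [π_comp, h₁, cF.id_comp]
    obtain ⟨k, _, huniq⟩ := hdiv x (cM.comp k₁ x) hπ
    have e₁ : k₁ = k := huniq k₁ ⟨h₁, rfl⟩
    have e₂ : k₂ = k := huniq k₂ ⟨h₂, h⟩
    rw [e₁, e₂]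
  refine ⟨?_, ?_, ?_, ?_⟩
  · -- (a)
    intro T R x k k' hk hk'
    have hkk' : π (cM.comp k k') = cF.id R := by
      rw [π_comp, hk, hk', cF.id_comp]
    obtain ⟨h1, h2⟩ := hTr x (cM.comp k k') hkk'
    obtain ⟨h3, h4⟩ := hTr x k hk
    obtain ⟨h5, h6⟩ := hTr x k' hk'
    refine cancel x _ _ h1 (by rw [π_comp, h3, h5, cF.id_comp]) ?_
    calc cM.comp (Tr x (cM.comp k k')) x = cM.comp x (cM.comp k k') := h2.symm
      _ = cM.comp (cM.comp x k) k' := (cM.assoc ..).symm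
      _ = cM.comp (cM.comp (Tr x k) x) k' := by rw [h4]
      _ = cM.comp (Tr x k) (cM.comp x k') := cM.assoc ..
      _ = cM.comp (Tr x k) (cM.comp (Tr x k') x) := by rw [h6]
      _ = cM.comp (cM.comp (Tr x k) (Tr x k')) x := (cM.assoc ..).symm
  · -- (b)
    intro T R x x' hxx' k hk
    obtain ⟨k₀, ⟨hk₀, hx'⟩, _⟩ := hdiv x x' hxx'
    obtain ⟨h3, h4⟩ := hTr x k hk
    obtain ⟨h5, h6⟩ := hTr x' k hk
    -- compare k₀ ≫ (Tr x k) and (Tr x' k) ≫ k₀ against x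
    have key : cM.comp k₀ (Tr x k) = cM.comp (Tr x' k) k₀ := by
      refine cancel x _ _ (by rw [π_comp, hk₀, h3, cF.id_comp])
        (by rw [π_comp, h5, hk₀, cF.id_comp]) ?_
      calc cM.comp (cM.comp k₀ (Tr x k)) x = cM.comp k₀ (cM.comp (Tr x k) x) := cM.assoc ..
        _ = cM.comp k₀ (cM.comp x k) := by rw [h4]
        _ = cM.comp (cM.comp k₀ x) k := (cM.assoc ..).symm
        _ = cM.comp x' k := by rw [← hx']
        _ = cM.comp (Tr x' k) x' := h6
        _ = cM.comp (Tr x' k) (cM.comp k₀ x) := by rw [← hx']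
        _ = cM.comp (cM.comp (Tr x' k) k₀) x := (cM.assoc ..).symm
    have comm : cM.comp k₀ (Tr x k) = cM.comp (Tr x k) k₀ := hcomm _ _ hk₀ h3
    refine cancel k₀ _ _ h3 h5 ?_
    rw [← comm, key]
  · -- (c1)
    intro R k hk
    obtain ⟨_, h2⟩ := hTr (cM.id R) k hk
    rw [cM.id_comp, cM.comp_id] at h2
    exact h2.symm
  · -- (c2)
    intro T R Q x x' k hk
    obtain ⟨h1, h2⟩ := hTr (cM.comp x x') k hk
    obtain ⟨h3, h4⟩ := hTr x' k hk
    obtain ⟨h5, h6⟩ := hTr x (Tr x' k) h3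
    refine cancel (cM.comp x x') _ _ h1 h5 ?_
    calc cM.comp (Tr (cM.comp x x') k) (cM.comp x x') = cM.comp (cM.comp x x') k := h2.symm
      _ = cM.comp x (cM.comp x' k) := cM.assoc ..
      _ = cM.comp x (cM.comp (Tr x' k) x') := by rw [h4]
      _ = cM.comp (cM.comp x (Tr x' k)) x' := (cM.assoc ..).symm
      _ = cM.comp (cM.comp (Tr x (Tr x' k)) x) x' := by rw [h6]
      _ = cM.comp (Tr x (Tr x' k)) (cM.comp x x') := cM.assoc ..
end

section
/- In the abstract locality setting, choose for every morphism φ : R ⟶ Q of 𝓕 a lift x_φ : R ⟶ Q in 𝓜 with π(x_φ) = φ and x_{𝟙_Q} = 𝟙_Q, and for composable ψ : T ⟶ R and φ : R ⟶ Q let k(φ,ψ) ∈ K(T) be the unique element with x_ψ ≫ x_φ = k(φ,ψ) ≫ x_{ψ ≫ φ}. Then k satisfies the 2-cocycle identity: for every further morphism η : W ⟶ T of 𝓕, one has, in the abelian group K(W) written additively, k(ψ,η) + k(φ, η ≫ ψ) = T_{x_η}(k(φ,ψ)) + k(ψ ≫ φ, η). -/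
open CategoryTheory

/-- In the abstract locality setting (full functor `π : 𝓜 ⥤ 𝓕` identity
on objects, kernel groups `K Q = {k : Q ⟶ Q | π k = 𝟙 Q}` abelian and consisting of
isomorphisms, divisibility), choose for every `𝓕`-morphism `φ : R ⟶ Q` a lift
`x φ : R ⟶ Q` in `𝓜` with `π (x φ) = φ` and `x (𝟙 Q) = 𝟙 Q`, and for composable
`ψ : T ⟶ R`, `φ : R ⟶ Q` let `k φ ψ ∈ K T` be the unique element with
`x ψ ≫ x φ = k φ ψ ≫ x (ψ ≫ φ)`.  Then `k` satisfies the 2-cocycle identity: for any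
further `η : W ⟶ T`, in the abelian group `K W` (whose addition is composition),
`k ψ η + k φ (η ≫ ψ) = Tr (x η) (k φ ψ) + k (ψ ≫ φ) η`. -/
theorem lifting_defect_is_two_cocycle
    {C : Type*} (cM cF : Category C)
    -- π : a full functor 𝓜 ⥤ 𝓕 which is the identity on objects
    (π : ∀ {X Y : C}, cM.Hom X Y → cF.Hom X Y)
    (π_id : ∀ X : C, π (cM.id X) = cF.id X)
    (π_comp : ∀ {X Y Z : C} (f : cM.Hom X Y) (g : cM.Hom Y Z),
      π (cM.comp f g) = cF.comp (π f) (π g))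
    (π_full : ∀ {X Y : C} (φ : cF.Hom X Y), ∃ x : cM.Hom X Y, π x = φ)
    -- (i) every element of K Q is an isomorphism and K Q is abelian under composition
    (hinv : ∀ {Q : C} (k : cM.Hom Q Q), π k = cF.id Q →
      ∃ k' : cM.Hom Q Q, cM.comp k k' = cM.id Q ∧ cM.comp k' k = cM.id Q)
    (hcomm : ∀ {Q : C} (k k' : cM.Hom Q Q), π k = cF.id Q → π k' = cF.id Q →
      cM.comp k k' = cM.comp k' k)
    -- (ii) divisibility
    (hdiv : ∀ {T R : C} (x y : cM.Hom T R), π x = π y →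
      ∃! k : cM.Hom T T, π k = cF.id T ∧ y = cM.comp k x)
    -- the transport T_x : K R → K T and its defining property
    (Tr : ∀ {T R : C}, cM.Hom T R → cM.Hom R R → cM.Hom T T)
    (hTr : ∀ {T R : C} (x : cM.Hom T R) (k : cM.Hom R R), π k = cF.id R →
      π (Tr x k) = cF.id T ∧ cM.comp x k = cM.comp (Tr x k) x)
    -- the chosen lifts x_φ of the 𝓕-morphisms φ
    (x : ∀ {R Q : C}, cF.Hom R Q → cM.Hom R Q)
    (hx : ∀ {R Q : C} (φ : cF.Hom R Q), π (x φ) = φ)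
    (hx_id : ∀ Q : C, x (cF.id Q) = cM.id Q)
    -- the 2-cochain k(φ,ψ) ∈ K T and its defining property
    (k : ∀ {T R Q : C}, cF.Hom R Q → cF.Hom T R → cM.Hom T T)
    (hk : ∀ {T R Q : C} (φ : cF.Hom R Q) (ψ : cF.Hom T R),
      π (k φ ψ) = cF.id T ∧
        cM.comp (x ψ) (x φ) = cM.comp (k φ ψ) (x (cF.comp ψ φ))) :
    -- the 2-cocycle identity in the abelian group K W, written with composition as addition
    ∀ (W T R Q : C) (φ : cF.Hom R Q) (ψ : cF.Hom T R) (η : cF.Hom W T),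
      cM.comp (k ψ η) (k φ (cF.comp η ψ)) =
        cM.comp (Tr (x η) (k φ ψ)) (k (cF.comp ψ φ) η) := by
  intro W T R Q φ ψ η
  obtain ⟨hkψη, ekψη⟩ := hk ψ η
  obtain ⟨hkφηψ, ekφηψ⟩ := hk φ (cF.comp η ψ)
  obtain ⟨hkφψ, ekφψ⟩ := hk φ ψ
  obtain ⟨hkψφη, ekψφη⟩ := hk (cF.comp ψ φ) η
  obtain ⟨hT, eT⟩ := hTr (x η) (k φ ψ) hkφψ
  have hassocF : cF.comp (cF.comp η ψ) φ = cF.comp η (cF.comp ψ φ) := cF.assoc η ψ φ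
  set m := x (cF.comp η (cF.comp ψ φ)) with hm
  set y := cM.comp (cM.comp (x η) (x ψ)) (x φ) with hy
  have hπy : π y = π m := by
    rw [hy, hm, π_comp, π_comp, hx, hx, hx, hx, cF.assoc]
  have hL : y = cM.comp (cM.comp (k ψ η) (k φ (cF.comp η ψ))) m := by
    rw [hy, ekψη, cM.assoc, ekφηψ, ← cM.assoc, hassocF]
  have hR : y = cM.comp (cM.comp (Tr (x η) (k φ ψ)) (k (cF.comp ψ φ) η)) m := by
    rw [hy, cM.assoc, ekφψ, ← cM.assoc, eT, cM.assoc, ekψφη, ← cM.assoc]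
  have hπL : π (cM.comp (k ψ η) (k φ (cF.comp η ψ))) = cF.id W := by
    rw [π_comp, hkψη, hkφηψ, cF.id_comp]
  have hπR : π (cM.comp (Tr (x η) (k φ ψ)) (k (cF.comp ψ φ) η)) = cF.id W := by
    rw [π_comp, hT, hkψφη, cF.id_comp]
  obtain ⟨c, hc, huniq⟩ := hdiv m y hπy.symm
  exact (huniq _ ⟨hπL, hL⟩).trans (huniq _ ⟨hπR, hR⟩).symm
end

section
/- In the abstract locality setting, assume in addition that 𝓕 has a terminal object. Then any two functors σ, τ : 𝓕 ⥤ 𝓜 with π ∘ σ = π ∘ τ = 𝟭_𝓕 (any two functorial sections of π) are naturally isomorphic by a natural isomorphism all of whose components lie in K: there exists a family (w_Q)_Q with w_Q ∈ K(Q) for every object Q such that τ(ζ) ≫ w_Q = w_R ≫ σ(ζ) for every morphism ζ : R ⟶ Q of 𝓕. -/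
open CategoryTheory

/-- In the abstract locality setting (full functor `π : 𝓜 ⥤ 𝓕` identity
on objects, kernel groups `K Q = {k : Q ⟶ Q | π k = 𝟙 Q}` abelian and consisting of
isomorphisms, divisibility), assume in addition that `𝓕` has a terminal object.  Then any
two functorial sections `σ, τ` of `π` are naturally isomorphic by a natural isomorphism
with components in `K`: there is a family `(w Q)_Q` with `w Q ∈ K Q` such that
`τ ζ ≫ w Q = w R ≫ σ ζ` for every `𝓕`-morphism `ζ : R ⟶ Q`. -/
theorem sections_are_naturally_isomorphic_of_terminal
    {C : Type*} (cM cF : Category C)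
    -- π : a full functor 𝓜 ⥤ 𝓕 which is the identity on objects
    (π : ∀ {X Y : C}, cM.Hom X Y → cF.Hom X Y)
    (π_id : ∀ X : C, π (cM.id X) = cF.id X)
    (π_comp : ∀ {X Y Z : C} (f : cM.Hom X Y) (g : cM.Hom Y Z),
      π (cM.comp f g) = cF.comp (π f) (π g))
    (π_full : ∀ {X Y : C} (φ : cF.Hom X Y), ∃ x : cM.Hom X Y, π x = φ)
    -- (i) every element of K Q is an isomorphism and K Q is abelian under composition
    (hinv : ∀ {Q : C} (k : cM.Hom Q Q), π k = cF.id Q →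
      ∃ k' : cM.Hom Q Q, cM.comp k k' = cM.id Q ∧ cM.comp k' k = cM.id Q)
    (hcomm : ∀ {Q : C} (k k' : cM.Hom Q Q), π k = cF.id Q → π k' = cF.id Q →
      cM.comp k k' = cM.comp k' k)
    -- (ii) divisibility
    (hdiv : ∀ {T R : C} (x y : cM.Hom T R), π x = π y →
      ∃! k : cM.Hom T T, π k = cF.id T ∧ y = cM.comp k x)
    -- 𝓕 has a terminal object
    (term : C) (hterm : ∀ X : C, ∃! _ : cF.Hom X term, True)
    -- σ : a functorial section of π
    (σ : ∀ {R Q : C}, cF.Hom R Q → cM.Hom R Q)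
    (σ_id : ∀ Q : C, σ (cF.id Q) = cM.id Q)
    (σ_comp : ∀ {T R Q : C} (ξ : cF.Hom T R) (ζ : cF.Hom R Q),
      σ (cF.comp ξ ζ) = cM.comp (σ ξ) (σ ζ))
    (σ_sec : ∀ {R Q : C} (ζ : cF.Hom R Q), π (σ ζ) = ζ)
    -- τ : another functorial section of π
    (τ : ∀ {R Q : C}, cF.Hom R Q → cM.Hom R Q)
    (τ_id : ∀ Q : C, τ (cF.id Q) = cM.id Q)
    (τ_comp : ∀ {T R Q : C} (ξ : cF.Hom T R) (ζ : cF.Hom R Q),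
      τ (cF.comp ξ ζ) = cM.comp (τ ξ) (τ ζ))
    (τ_sec : ∀ {R Q : C} (ζ : cF.Hom R Q), π (τ ζ) = ζ) :
    -- σ and τ are naturally isomorphic via components w Q ∈ K Q
    ∃ w : ∀ Q : C, cM.Hom Q Q,
      (∀ Q : C, π (w Q) = cF.id Q) ∧
      (∀ (R Q : C) (ζ : cF.Hom R Q),
        cM.comp (τ ζ) (w Q) = cM.comp (w R) (σ ζ)) := by
  classical
  have t : ∀ X : C, cF.Hom X term := fun X => (hterm X).exists.choose
  have tuniq : ∀ {X : C} (f : cF.Hom X term), f = t X := fun {X} f =>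
    (hterm X).unique trivial trivial
  have hπ : ∀ Q, π (σ (t Q)) = π (τ (t Q)) := fun Q => by rw [σ_sec, τ_sec]
  choose w hwπ hw using fun Q => (hdiv (σ (t Q)) (τ (t Q)) (hπ Q)).exists
  refine ⟨w, hwπ, ?_⟩
  intro R Q ζ
  have hcomp : cF.comp ζ (t Q) = t R := tuniq _
  have h1 : cM.comp (cM.comp (τ ζ) (w Q)) (σ (t Q)) = τ (t R) := by
    rw [cM.assoc, ← hw Q, ← τ_comp, hcomp]
  have h2 : cM.comp (cM.comp (w R) (σ ζ)) (σ (t Q)) = τ (t R) := by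
    rw [cM.assoc, ← σ_comp, hcomp, hw R]
  obtain ⟨k, ⟨hkπ, hk⟩, _⟩ := hdiv (cM.comp (τ ζ) (w Q)) (cM.comp (w R) (σ ζ))
    (by rw [π_comp, π_comp, hwπ, hwπ, σ_sec, τ_sec, cF.comp_id, cF.id_comp])
  obtain ⟨k0, hk0, hu0⟩ := hdiv (τ (t R)) (τ (t R)) rfl
  have hkid : k = cM.id R := by
    have h3 : τ (t R) = cM.comp k (τ (t R)) := by
      calc τ (t R) = cM.comp (cM.comp (w R) (σ ζ)) (σ (t Q)) := h2.symm
        _ = cM.comp (cM.comp k (cM.comp (τ ζ) (w Q))) (σ (t Q)) := by rw [hk]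
        _ = cM.comp k (cM.comp (cM.comp (τ ζ) (w Q)) (σ (t Q))) := cM.assoc ..
        _ = cM.comp k (τ (t R)) := by rw [h1]
    have hk' := hu0 k ⟨hkπ, h3⟩
    have hid := hu0 (cM.id R) ⟨π_id R, (cM.id_comp _).symm⟩
    rw [hk', hid]
  rw [hk, hkid, cM.id_comp]
end

section
/- In the abstract locality setting, choose for every morphism φ : R ⟶ Q of 𝓕 a lift x_φ : R ⟶ Q in 𝓜 with π(x_φ) = φ and x_{𝟙_Q} = 𝟙_Q, and for composable ψ : T ⟶ R and φ : R ⟶ Q let k(φ,ψ) ∈ K(T) be the unique element with x_ψ ≫ x_φ = k(φ,ψ) ≫ x_{ψ ≫ φ}. If k is a 2-coboundary, that is, if there exists a family c assigning to every morphism φ : R ⟶ Q of 𝓕 an element c(φ) ∈ K(R) such that k(φ,ψ) = T_{x_ψ}(c(φ)) − c(ψ ≫ φ) + c(ψ) for all composable ψ : T ⟶ R and φ : R ⟶ Q (in the abelian group K(T) written additively), then π admits a functorial section: there exists a functor σ : 𝓕 ⥤ 𝓜 with π ∘ σ = 𝟭_𝓕. -/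
open CategoryTheory

/-- In the abstract locality setting (full functor `π : 𝓜 ⥤ 𝓕` identity
on objects, kernel groups `K Q = {k : Q ⟶ Q | π k = 𝟙 Q}` abelian and consisting of
isomorphisms, divisibility), choose lifts `x φ` of the `𝓕`-morphisms with `x (𝟙 Q) = 𝟙 Q`
and let `k φ ψ ∈ K T` be the unique element with `x ψ ≫ x φ = k φ ψ ≫ x (ψ ≫ φ)`.  If `k`
is a 2-coboundary — i.e. there is a family `c` with `c φ ∈ K R` for `φ : R ⟶ Q` such that
`k φ ψ = Tr (x ψ) (c φ) - c (ψ ≫ φ) + c ψ` in the abelian group `K T` (stated here,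
additively equivalently, as `k φ ψ + c (ψ ≫ φ) = Tr (x ψ) (c φ) + c ψ`, addition being
composition) — then `π` admits a functorial section `σ : 𝓕 ⥤ 𝓜` with `π ∘ σ = 𝟭 𝓕`. -/
theorem section_exists_of_two_coboundary
    {C : Type*} (cM cF : Category C)
    -- π : a full functor 𝓜 ⥤ 𝓕 which is the identity on objects
    (π : ∀ {X Y : C}, cM.Hom X Y → cF.Hom X Y)
    (π_id : ∀ X : C, π (cM.id X) = cF.id X)
    (π_comp : ∀ {X Y Z : C} (f : cM.Hom X Y) (g : cM.Hom Y Z),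
      π (cM.comp f g) = cF.comp (π f) (π g))
    (π_full : ∀ {X Y : C} (φ : cF.Hom X Y), ∃ x : cM.Hom X Y, π x = φ)
    -- (i) every element of K Q is an isomorphism and K Q is abelian under composition
    (hinv : ∀ {Q : C} (k : cM.Hom Q Q), π k = cF.id Q →
      ∃ k' : cM.Hom Q Q, cM.comp k k' = cM.id Q ∧ cM.comp k' k = cM.id Q)
    (hcomm : ∀ {Q : C} (k k' : cM.Hom Q Q), π k = cF.id Q → π k' = cF.id Q →
      cM.comp k k' = cM.comp k' k)
    -- (ii) divisibility
    (hdiv : ∀ {T R : C} (x y : cM.Hom T R), π x = π y →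
      ∃! k : cM.Hom T T, π k = cF.id T ∧ y = cM.comp k x)
    -- the transport T_x : K R → K T and its defining property
    (Tr : ∀ {T R : C}, cM.Hom T R → cM.Hom R R → cM.Hom T T)
    (hTr : ∀ {T R : C} (x : cM.Hom T R) (k : cM.Hom R R), π k = cF.id R →
      π (Tr x k) = cF.id T ∧ cM.comp x k = cM.comp (Tr x k) x)
    -- the chosen lifts x_φ of the 𝓕-morphisms φ
    (x : ∀ {R Q : C}, cF.Hom R Q → cM.Hom R Q)
    (hx : ∀ {R Q : C} (φ : cF.Hom R Q), π (x φ) = φ)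
    (hx_id : ∀ Q : C, x (cF.id Q) = cM.id Q)
    -- the 2-cochain k(φ,ψ) ∈ K T and its defining property
    (k : ∀ {T R Q : C}, cF.Hom R Q → cF.Hom T R → cM.Hom T T)
    (hk : ∀ {T R Q : C} (φ : cF.Hom R Q) (ψ : cF.Hom T R),
      π (k φ ψ) = cF.id T ∧
        cM.comp (x ψ) (x φ) = cM.comp (k φ ψ) (x (cF.comp ψ φ)))
    -- hypothesis: k is a 2-coboundary, k φ ψ = Tr (x ψ) (c φ) - c (ψ ≫ φ) + c ψ
    (hcobound : ∃ c : ∀ {R Q : C}, cF.Hom R Q → cM.Hom R R,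
      (∀ {R Q : C} (φ : cF.Hom R Q), π (c φ) = cF.id R) ∧
      (∀ {T R Q : C} (φ : cF.Hom R Q) (ψ : cF.Hom T R),
        cM.comp (k φ ψ) (c (cF.comp ψ φ)) = cM.comp (Tr (x ψ) (c φ)) (c ψ))) :
    -- conclusion: π admits a functorial section σ with π ∘ σ = 𝟭 𝓕
    ∃ σ : ∀ (R Q : C), cF.Hom R Q → cM.Hom R Q,
      (∀ Q : C, σ Q Q (cF.id Q) = cM.id Q) ∧
      (∀ (T R Q : C) (ξ : cF.Hom T R) (ζ : cF.Hom R Q),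
        σ T Q (cF.comp ξ ζ) = cM.comp (σ T R ξ) (σ R Q ζ)) ∧
      (∀ (R Q : C) (ζ : cF.Hom R Q), π (σ R Q ζ) = ζ) := by
  classical
  obtain ⟨c, hcK, hc⟩ := hcobound
  have hdex : ∀ {R Q : C} (φ : cF.Hom R Q),
      ∃ k' : cM.Hom R R, cM.comp (c φ) k' = cM.id R ∧ cM.comp k' (c φ) = cM.id R :=
    fun φ => hinv (c φ) (hcK φ)
  let d : ∀ {R Q : C}, cF.Hom R Q → cM.Hom R R := fun φ => (hdex φ).choose
  have hd1 : ∀ {R Q : C} (φ : cF.Hom R Q), cM.comp (c φ) (d φ) = cM.id R :=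
    fun φ => (hdex φ).choose_spec.1
  have hd2 : ∀ {R Q : C} (φ : cF.Hom R Q), cM.comp (d φ) (c φ) = cM.id R :=
    fun φ => (hdex φ).choose_spec.2
  have hdK : ∀ {R Q : C} (φ : cF.Hom R Q), π (d φ) = cF.id R := by
    intro R Q φ
    have h := congrArg π (hd1 φ)
    rw [π_comp, π_id, hcK, cF.id_comp] at h
    exact h
  have uniq : ∀ {T R : C} (x' : cM.Hom T R) (a b : cM.Hom T T), π a = cF.id T →
      π b = cF.id T → cM.comp a x' = cM.comp b x' → a = b := by
    intro T R x' a b ha hb hab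
    obtain ⟨u, _, huniq⟩ := hdiv x' (cM.comp a x')
      (by rw [π_comp, ha, cF.id_comp])
    exact (huniq a ⟨ha, rfl⟩).trans (huniq b ⟨hb, hab⟩).symm
  have hcid : ∀ Q : C, c (cF.id Q) = cM.id Q := by
    intro Q
    have hkii : k (cF.id Q) (cF.id Q) = cM.id Q := by
      have h := (hk (cF.id Q) (cF.id Q)).2
      rw [hx_id, cM.id_comp, cF.id_comp, hx_id, cM.comp_id] at h
      exact h.symm
    have hT := (hTr (x (cF.id Q)) (c (cF.id Q)) (hcK _)).2
    rw [hx_id, cM.id_comp, cM.comp_id] at hT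
    have h := hc (cF.id Q) (cF.id Q)
    rw [hkii, cM.id_comp, cF.id_comp, hx_id, ← hT] at h
    -- h : c (id) = c (id) ≫ c (id)
    have h2 := congrArg (fun z => cM.comp z (d (cF.id Q))) h
    rw [hd1, cM.assoc, hd1, cM.comp_id] at h2
    exact h2.symm
  have hdid : ∀ Q : C, d (cF.id Q) = cM.id Q := by
    intro Q
    have h := hd2 (cF.id Q)
    rw [hcid, cM.comp_id] at h
    exact h
  refine ⟨fun R Q ζ => cM.comp (d ζ) (x ζ), ?_, ?_, ?_⟩
  · intro Q
    show cM.comp (d (cF.id Q)) (x (cF.id Q)) = cM.id Q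
    rw [hdid, hx_id, cM.comp_id]
  · intro T R Q ξ ζ
    show cM.comp (d (cF.comp ξ ζ)) (x (cF.comp ξ ζ))
      = cM.comp (cM.comp (d ξ) (x ξ)) (cM.comp (d ζ) (x ζ))
    have hTrdK := (hTr (x ξ) (d ζ) (hdK ζ)).1
    have hTrd := (hTr (x ξ) (d ζ) (hdK ζ)).2
    have hTrcK := (hTr (x ξ) (c ζ) (hcK ζ)).1
    have hTrc := (hTr (x ξ) (c ζ) (hcK ζ)).2
    have hTrinv : cM.comp (Tr (x ξ) (c ζ)) (Tr (x ξ) (d ζ)) = cM.id T := by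
      apply uniq (x ξ)
      · rw [π_comp, hTrcK, hTrdK, cF.id_comp]
      · exact π_id T
      · rw [cM.assoc, ← hTrd, ← cM.assoc, ← hTrc, cM.assoc, hd1, cM.comp_id,
          cM.id_comp]
    have hTrinv' : cM.comp (Tr (x ξ) (d ζ)) (Tr (x ξ) (c ζ)) = cM.id T := by
      rw [hcomm _ _ hTrdK hTrcK]; exact hTrinv
    have hkexp : k ζ ξ = cM.comp (Tr (x ξ) (c ζ)) (cM.comp (c ξ) (d (cF.comp ξ ζ))) := by
      have h := congrArg (fun z => cM.comp z (d (cF.comp ξ ζ))) (hc ζ ξ)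
      rw [cM.assoc, hd1, cM.comp_id, cM.assoc] at h
      exact h
    have hE : cM.comp (d ξ) (cM.comp (Tr (x ξ) (d ζ)) (k ζ ξ)) = d (cF.comp ξ ζ) := by
      rw [hkexp, ← cM.assoc (Tr (x ξ) (d ζ)), hTrinv', cM.id_comp, ← cM.assoc,
        hd2, cM.id_comp]
    calc cM.comp (d (cF.comp ξ ζ)) (x (cF.comp ξ ζ))
        = cM.comp (cM.comp (d ξ) (cM.comp (Tr (x ξ) (d ζ)) (k ζ ξ)))
            (x (cF.comp ξ ζ)) := by rw [hE]
      _ = cM.comp (d ξ) (cM.comp (Tr (x ξ) (d ζ))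
            (cM.comp (k ζ ξ) (x (cF.comp ξ ζ)))) := by
          rw [cM.assoc, cM.assoc]
      _ = cM.comp (d ξ) (cM.comp (Tr (x ξ) (d ζ)) (cM.comp (x ξ) (x ζ))) := by
          rw [← (hk ζ ξ).2]
      _ = cM.comp (cM.comp (d ξ) (x ξ)) (cM.comp (d ζ) (x ζ)) := by
          rw [← cM.assoc (Tr (x ξ) (d ζ)) (x ξ) (x ζ), ← hTrd, cM.assoc,
            ← cM.assoc (d ξ) (x ξ)]
  · intro R Q ζ
    show π (cM.comp (d ζ) (x ζ)) = ζ
    rw [π_comp, hdK, hx, cF.id_comp]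
end
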